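/- arXiv:1902.04811 — 4 statements merged into one kernel-verified Lean document; each statement's English description precedes it below -/
import Mathlib

section
/- Let M ∈ ℝ^{d×d} be symmetric positive semidefinite whose top two eigenvalues satisfy λ₁ > λ₂ ≥ 0, and let f(x) = (1/2)‖xxᵀ − M‖_F². Then every second-order stationary point of f, i.e., every x with ∇f(x) = 0 and ∇²f(x) ⪰ 0, is a global minimizer of f; specifically, x = √λ₁·v₁ or x = −√λ₁·v₁ where v₁ is a unit eigenvector of M for λ₁. -/
open scoped RealInnerProductSpace

/-! With `A` the operator of `M`, `f x = ½ ‖x‖⁴ - ⟪x, A x⟫ + ½ ‖M‖²`, so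
`∇f x = 2 ‖x‖² x - 2 A x` and the Hessian form at `x` is `2 ‖x‖² ‖u‖² + 4 ⟪x, u⟫² - 2 ⟪u, A u⟫`.
A stationary point therefore satisfies `A x = ‖x‖² x`, and the Rayleigh bound `⟪x, A x⟫ ≤ λ₁ ‖x‖²`
gives `‖x‖² ≤ λ₁`. If `x ⟂ v₁`, the Hessian form at `u = v₁` gives `‖x‖² ≥ λ₁`; otherwise `x` and
`v₁` are eigenvectors with the same eigenvalue. Either way `‖x‖² = λ₁`, so by the gap `x` is
orthogonal to all other `vⱼ`, i.e. `x = ±√λ₁ v₁`. Finally the Rayleigh bound also gives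
`f y ≥ ½ (‖y‖² - λ₁)² - ½ λ₁² + ½ ‖M‖² ≥ f x`. -/

section Spectral

variable {E : Type*} [NormedAddCommGroup E] [InnerProductSpace ℝ E] {T : E →ₗ[ℝ] E}

theorem LinearMap.IsSymmetric.inner_eq_zero_of_eigenvalue_ne (hT : T.IsSymmetric) {v x : E}
    {a c : ℝ} (hv : T v = a • v) (hx : T x = c • x) (hac : a ≠ c) : ⟪v, x⟫ = 0 := by
  have h : a * ⟪v, x⟫ = c * ⟪v, x⟫ := by
    rw [← real_inner_smul_left, ← hv, hT, hx, real_inner_smul_right]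
  by_contra hvx
  exact hac (mul_right_cancel₀ hvx h)

theorem eq_sqrt_smul_or_eq_neg_sqrt_smul {v x : E} {c μ : ℝ} (hv : ‖v‖ = 1) (hx : x = c • v)
    (hxx : ⟪x, x⟫ = μ) : x = √μ • v ∨ x = -√μ • v := by
  have hμ : √μ = |c| := by
    rw [← hxx, hx, real_inner_smul_left, real_inner_smul_right,
      inner_self_eq_one_of_norm_eq_one hv, mul_one, ← sq, Real.sqrt_sq_eq_abs]
  rw [hμ, hx]
  rcases abs_choice c with h | h <;> rw [h]
  · exact .inl rfl
  · exact .inr (by rw [neg_neg])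

variable {ι : Type*} [Fintype ι] (b : OrthonormalBasis ι ℝ E) {lam : ι → ℝ}

theorem OrthonormalBasis.eq_inner_smul_of_inner_eq_zero {i : ι} {x : E}
    (h : ∀ j ≠ i, ⟪b j, x⟫ = 0) : x = ⟪b i, x⟫ • b i := by
  conv_lhs => rw [← b.sum_repr' x]
  exact Finset.sum_eq_single i (fun j _ hj => by rw [h j hj, zero_smul])
    (fun hi => absurd (Finset.mem_univ i) hi)

variable {b}

theorem inner_apply_self_le_of_eigenbasis (hT : T.IsSymmetric) (hb : ∀ i, T (b i) = lam i • b i)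
    {μ : ℝ} (hle : ∀ i, lam i ≤ μ) (y : E) : ⟪y, T y⟫ ≤ μ * ⟪y, y⟫ := by
  rw [← b.sum_inner_mul_inner y (T y), ← b.sum_inner_mul_inner y y, Finset.mul_sum]
  refine Finset.sum_le_sum fun i _ => ?_
  rw [← hT, hb, real_inner_smul_left, real_inner_comm y (b i)]
  nlinarith [hle i, sq_nonneg ⟪b i, y⟫]

theorem eq_top_eigenvector_of_second_order_stationary (hT : T.IsSymmetric)
    (hb : ∀ i, T (b i) = lam i • b i)
    {i₀ : ι} (htop : ∀ j ≠ i₀, lam j < lam i₀) (hnn : 0 ≤ lam i₀) {x : E}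
    (hstat : T x = ⟪x, x⟫ • x) (hcurv : ∀ u, ⟪u, T u⟫ ≤ ⟪x, x⟫ * ⟪u, u⟫ + 2 * ⟪x, u⟫ ^ 2) :
    ⟪x, x⟫ = lam i₀ ∧ x = ⟪b i₀, x⟫ • b i₀ := by
  have hle : ∀ j, lam j ≤ lam i₀ := fun j => by
    rcases eq_or_ne j i₀ with rfl | hj
    exacts [le_rfl, (htop j hj).le]
  have hs_le : ⟪x, x⟫ ≤ lam i₀ := by
    have h := inner_apply_self_le_of_eigenbasis hT hb hle x
    rw [hstat, real_inner_smul_right] at h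
    rcases (real_inner_self_nonneg (x := x)).eq_or_lt with h0 | hpos
    · exact h0 ▸ hnn
    · exact le_of_mul_le_mul_right h hpos
  have hs : ⟪x, x⟫ = lam i₀ := by
    refine le_antisymm hs_le ?_
    by_cases h0 : ⟪b i₀, x⟫ = 0
    · have h := hcurv (b i₀)
      rw [hb, real_inner_smul_right, inner_self_eq_one_of_norm_eq_one (b.norm_eq_one i₀),
        real_inner_comm (b i₀) x, h0] at h
      linarith
    · by_contra hlt
      exact h0 (hT.inner_eq_zero_of_eigenvalue_ne (hb i₀) hstat (ne_of_gt (not_le.mp hlt)))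
  refine ⟨hs, b.eq_inner_smul_of_inner_eq_zero fun j hj => ?_⟩
  exact hT.inner_eq_zero_of_eigenvalue_ne (hb j) hstat (hs ▸ (htop j hj).ne)

end Spectral

section RankOneLoss

variable {E : Type*} [NormedAddCommGroup E] [InnerProductSpace ℝ E]

noncomputable def rankOneLoss (A : E →L[ℝ] E) (y : E) : ℝ := (1 / 2) * ⟪y, y⟫ ^ 2 - ⟪y, A y⟫

theorem half_sum_sq_mul_sub_eq_rankOneLoss_add {ι : Type*} [Fintype ι] [DecidableEq ι]
    (M : Matrix ι ι ℝ) (x : EuclideanSpace ℝ ι) :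
    (1 / 2) * ∑ i, ∑ j, (x i * x j - M i j) ^ 2
      = rankOneLoss (Matrix.toEuclideanCLM (𝕜 := ℝ) M) x + (1 / 2) * ∑ i, ∑ j, M i j ^ 2 := by
  rw [rankOneLoss, Matrix.inner_toEuclideanCLM]
  simp only [PiLp.inner_apply, RCLike.inner_apply, conj_trivial, dotProduct, Matrix.mulVec,
    pow_two, Finset.sum_mul, Finset.mul_sum, ← Finset.sum_sub_distrib,
    ← Finset.sum_add_distrib]
  refine Finset.sum_congr rfl fun i _ => Finset.sum_congr rfl fun j _ => ?_
  ring

theorem rankOneLoss_le_of_inner_self_eq_top_eigenvalue {A : E →L[ℝ] E} {μ : ℝ}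
    (hbound : ∀ y, ⟪y, A y⟫ ≤ μ * ⟪y, y⟫) {x : E} (hx : A x = μ • x) (hxx : ⟪x, x⟫ = μ) (y : E) :
    rankOneLoss A x ≤ rankOneLoss A y := by
  have hAx : ⟪x, A x⟫ = μ * μ := by rw [hx, real_inner_smul_right, hxx]
  simp only [rankOneLoss, hAx, hxx]
  nlinarith [hbound y, sq_nonneg (⟪y, y⟫ - μ)]

variable [CompleteSpace E]

theorem gradient_add_const (f : E → ℝ) (c : ℝ) :
    gradient (fun y => f y + c) = gradient f := by
  funext y
  simp only [gradient, fderiv_add_const]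

variable {A : E →L[ℝ] E}

theorem hasGradientAt_rankOneLoss (hA : (A : E →ₗ[ℝ] E).IsSymmetric) (x : E) :
    HasGradientAt (rankOneLoss A) ((2 * ⟪x, x⟫) • x - (2 : ℝ) • A x) x := by
  rw [hasGradientAt_iff_hasFDerivAt]
  have hsq := (hasFDerivAt_id x).inner ℝ (hasFDerivAt_id x)
  have hquad := (hasFDerivAt_id x).inner ℝ A.hasFDerivAt
  refine (((hsq.mul hsq).const_mul (1 / 2 : ℝ)).sub hquad).congr_of_eventuallyEq
    (Filter.Eventually.of_forall fun y => by simp [rankOneLoss, pow_two])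
    |>.congr_fderiv ?_
  ext u
  have hAxu : ⟪A x, u⟫ = ⟪x, A u⟫ := hA x u
  simp only [one_div, id_eq, inner_self_eq_norm_sq_to_K, Real.ringHom_apply, smul_add,
    sub_apply, add_apply, smul_apply, ContinuousLinearMap.comp_apply,
    ContinuousLinearMap.prod_apply, ContinuousLinearMap.id_apply,
    fderivInnerCLM_apply, real_inner_comm x u, real_inner_comm (A x) u, hAxu, smul_eq_mul,
    map_sub, map_smul, InnerProductSpace.toDual_apply_apply]
  ring

theorem gradient_rankOneLoss (hA : (A : E →ₗ[ℝ] E).IsSymmetric) :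
    gradient (rankOneLoss A) = fun y => (2 * ⟪y, y⟫) • y - (2 : ℝ) • A y :=
  gradient_eq (hasGradientAt_rankOneLoss hA)

theorem inner_fderiv_gradient_rankOneLoss (hA : (A : E →ₗ[ℝ] E).IsSymmetric) (x u : E) :
    ⟪u, fderiv ℝ (gradient (rankOneLoss A)) x u⟫
      = 2 * ⟪x, x⟫ * ⟪u, u⟫ + 4 * ⟪x, u⟫ ^ 2 - 2 * ⟪u, A u⟫ := by
  have hsq := (hasFDerivAt_id x).inner ℝ (hasFDerivAt_id x)
  have hder := ((hsq.const_mul (2 : ℝ)).smul (hasFDerivAt_id x)).sub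
    (A.hasFDerivAt.const_smul (2 : ℝ))
  rw [gradient_rankOneLoss hA,
    (show HasFDerivAt (fun y => (2 * ⟪y, y⟫) • y - (2 : ℝ) • A y) _ x from hder).fderiv]
  simp only [id_eq, sub_apply, add_apply, smul_apply, ContinuousLinearMap.id_apply,
    ContinuousLinearMap.smulRight_apply, ContinuousLinearMap.comp_apply,
    ContinuousLinearMap.prod_apply, fderivInnerCLM_apply, real_inner_comm x u, smul_eq_mul,
    inner_sub_right, inner_add_right, real_inner_smul_right]
  ring

theorem apply_eq_inner_self_smul_of_gradient_rankOneLoss_eq_zero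
    (hA : (A : E →ₗ[ℝ] E).IsSymmetric) {x : E} (h : gradient (rankOneLoss A) x = 0) :
    A x = ⟪x, x⟫ • x := by
  rw [gradient_rankOneLoss hA, sub_eq_zero, mul_smul] at h
  exact (smul_right_injective E two_ne_zero h).symm

theorem inner_apply_le_of_inner_fderiv_gradient_rankOneLoss_nonneg
    (hA : (A : E →ₗ[ℝ] E).IsSymmetric) {x u : E}
    (h : 0 ≤ ⟪u, fderiv ℝ (gradient (rankOneLoss A)) x u⟫) :
    ⟪u, A u⟫ ≤ ⟪x, x⟫ * ⟪u, u⟫ + 2 * ⟪x, u⟫ ^ 2 := by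
  rw [inner_fderiv_gradient_rankOneLoss hA] at h
  linarith

end RankOneLoss

/-- For a symmetric PSD matrix `M` with eigengap `λ₁ > λ₂ ≥ 0` between its
top two eigenvalues, every second-order stationary point of
`f(x) = (1/2)‖xxᵀ - M‖_F²` is a global minimizer; specifically `x = ±√λ₁ • v₁`. -/
theorem sosp_is_global_min_top_eigenvector
    (d : ℕ) (hd : 2 ≤ d) (M : Matrix (Fin d) (Fin d) ℝ)
    (hpsd : M.PosSemidef)
    (lam : Fin d → ℝ) (v : Fin d → EuclideanSpace ℝ (Fin d))
    (hortho : Orthonormal ℝ v)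
    (heig : ∀ i, M.mulVec (v i) = lam i • v i)
    (hmono : ∀ i j : Fin d, i ≤ j → lam j ≤ lam i)
    (hgap : lam ⟨1, by omega⟩ < lam ⟨0, by omega⟩)
    (hnn : 0 ≤ lam ⟨1, by omega⟩)
    (f : EuclideanSpace ℝ (Fin d) → ℝ)
    (hf : f = fun x => (1 / 2) * ∑ i, ∑ j, (x i * x j - M i j) ^ 2)
    (x : EuclideanSpace ℝ (Fin d))
    (hgrad : gradient f x = 0)
    (hhess : ∀ u : EuclideanSpace ℝ (Fin d), 0 ≤ ⟪u, (fderiv ℝ (gradient f) x) u⟫) :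
    (∀ y, f x ≤ f y) ∧
      (x = Real.sqrt (lam ⟨0, by omega⟩) • v ⟨0, by omega⟩ ∨
        x = -(Real.sqrt (lam ⟨0, by omega⟩)) • v ⟨0, by omega⟩) := by
  set A := Matrix.toEuclideanCLM (𝕜 := ℝ) M
  have hA : (A : EuclideanSpace ℝ (Fin d) →ₗ[ℝ] _).IsSymmetric := by
    rw [Matrix.coe_toEuclideanCLM_eq_toEuclideanLin]
    exact Matrix.isSymmetric_toEuclideanLin_iff.mpr hpsd.isHermitian
  obtain ⟨b, rfl⟩ : ∃ b : OrthonormalBasis (Fin d) ℝ (EuclideanSpace ℝ (Fin d)), ⇑b = v :=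
    ⟨.mk hortho (hortho.linearIndependent.span_eq_top_of_card_eq_finrank' (by simp)).ge,
      OrthonormalBasis.coe_mk _ _⟩
  have hb : ∀ i, A (b i) = lam i • b i := fun i => WithLp.ofLp_injective 2 (heig i)
  have hf' : f = fun y => rankOneLoss A y + (1 / 2) * ∑ i, ∑ j, M i j ^ 2 := by
    rw [hf]
    funext y
    exact half_sum_sq_mul_sub_eq_rankOneLoss_add M y
  have hgradf : gradient f = gradient (rankOneLoss A) := by
    rw [hf', gradient_add_const]
  set i₀ : Fin d := ⟨0, by omega⟩
  have htop : ∀ j ≠ i₀, lam j < lam i₀ := fun j hj =>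
    (hmono ⟨1, by omega⟩ j (Nat.one_le_iff_ne_zero.mpr (Fin.val_ne_iff.mpr hj))).trans_lt hgap
  have hstat := apply_eq_inner_self_smul_of_gradient_rankOneLoss_eq_zero hA (hgradf ▸ hgrad)
  obtain ⟨hxx, hx⟩ :=
    eq_top_eigenvector_of_second_order_stationary hA hb htop (hnn.trans hgap.le) hstat
    fun u => inner_apply_le_of_inner_fderiv_gradient_rankOneLoss_nonneg hA (hgradf ▸ hhess u)
  refine ⟨fun y => ?_, eq_sqrt_smul_or_eq_neg_sqrt_smul (b.norm_eq_one i₀) hx hxx⟩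
  rw [hf']
  have hrayleigh := inner_apply_self_le_of_eigenbasis hA hb fun j => hmono i₀ j j.val.zero_le
  exact add_le_add_left
    (rankOneLoss_le_of_inner_self_eq_top_eigenvalue hrayleigh (hxx ▸ hstat) hxx y) _
end

section
/- Let f : ℝ^d → ℝ be ℓ-gradient Lipschitz, let 0 < η ≤ 1/ℓ, and let x_{t+1} = x_t − η∇f(x_t) be the gradient descent sequence. Then for any t ≥ τ > 0: ‖x_τ − x₀‖ ≤ √(2ηt·(f(x₀) − f(x_t))). -/
/-!
By the descent lemma, a gradient step with `ℓ η ≤ 1` lowers `f` by at least `η/2 ‖∇f‖²`, so the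
squared gradients along the first `τ` steps sum to at most `2/η (f x₀ - f x_τ)`. The displacement
`‖x_τ - x₀‖` is at most the path length `η ∑ ‖∇f(x_k)‖ ≤ η √τ (∑ ‖∇f(x_k)‖²)^{1/2}` by
Cauchy–Schwarz, and since `f` decreases along the iterates, `τ` and `x_τ` may be replaced by
`t` and `x_t`.
-/

open scoped RealInnerProductSpace Gradient
open Finset

variable {E : Type*} [NormedAddCommGroup E] [InnerProductSpace ℝ E] [CompleteSpace E]

theorem hasDerivAt_apply_add_smul {f : E → ℝ} (hf : Differentiable ℝ f) (x v : E) (s : ℝ) :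
    HasDerivAt (fun s : ℝ ↦ f (x + s • v)) ⟪∇ f (x + s • v), v⟫ s := by
  have hline : HasDerivAt (fun s : ℝ ↦ x + s • v) v s := by
    simpa using ((hasDerivAt_id s).smul_const v).const_add x
  exact (hf _).hasGradientAt.hasFDerivAt.comp_hasDerivAt s hline

theorem apply_le_add_inner_gradient_add_sq {f : E → ℝ} {ℓ : ℝ} (hf : Differentiable ℝ f)
    (hlip : ∀ x y : E, ‖∇ f x - ∇ f y‖ ≤ ℓ * ‖x - y‖) (x y : E) :
    f y ≤ f x + ⟪∇ f x, y - x⟫ + ℓ / 2 * ‖y - x‖ ^ 2 := by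
  set v := y - x
  -- the gap between the paraboloid and `f` along the segment is monotone
  let gap : ℝ → ℝ := fun s ↦ f x + s * ⟪∇ f x, v⟫ + ℓ / 2 * s ^ 2 * ‖v‖ ^ 2 - f (x + s • v)
  have hgap : ∀ s, HasDerivAt gap (⟪∇ f x, v⟫ + ℓ * s * ‖v‖ ^ 2 - ⟪∇ f (x + s • v), v⟫) s := by
    intro s
    refine ((((hasDerivAt_id s).mul_const ⟪∇ f x, v⟫).const_add (f x)).add
      (((hasDerivAt_pow 2 s).const_mul (ℓ / 2)).mul_const (‖v‖ ^ 2))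
      |>.sub (hasDerivAt_apply_add_smul hf x v s)).congr_deriv ?_
    simp only [Nat.cast_ofNat]
    ring
  have hgap_nonneg : ∀ s ∈ interior (Set.Ici (0 : ℝ)),
      0 ≤ ⟪∇ f x, v⟫ + ℓ * s * ‖v‖ ^ 2 - ⟪∇ f (x + s • v), v⟫ := by
    intro s hs
    rw [interior_Ici, Set.mem_Ioi] at hs
    have hgrad : ⟪∇ f (x + s • v) - ∇ f x, v⟫ ≤ ℓ * s * ‖v‖ ^ 2 :=
      calc ⟪∇ f (x + s • v) - ∇ f x, v⟫
          ≤ ‖∇ f (x + s • v) - ∇ f x‖ * ‖v‖ := real_inner_le_norm _ _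
        _ ≤ ℓ * ‖x + s • v - x‖ * ‖v‖ := by gcongr; exact hlip _ _
        _ = ℓ * s * ‖v‖ ^ 2 := by
          rw [add_sub_cancel_left, norm_smul, Real.norm_of_nonneg hs.le]; ring
    rw [inner_sub_left] at hgrad
    linarith
  have hmono : MonotoneOn gap (Set.Ici 0) :=
    monotoneOn_of_hasDerivWithinAt_nonneg (convex_Ici 0)
      (fun s _ ↦ (hgap s).continuousAt.continuousWithinAt)
      (fun s _ ↦ (hgap s).hasDerivWithinAt) hgap_nonneg
  have h01 : gap 0 ≤ gap 1 := hmono Set.self_mem_Ici (Set.mem_Ici.2 zero_le_one) zero_le_one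
  simp only [gap, v, zero_mul, mul_zero, add_zero, zero_smul, one_smul, one_mul, one_pow, mul_one,
    zero_pow two_ne_zero, add_sub_cancel] at h01
  linarith

theorem apply_sub_smul_gradient_le {f : E → ℝ} {ℓ η : ℝ} (hf : Differentiable ℝ f)
    (hlip : ∀ x y : E, ‖∇ f x - ∇ f y‖ ≤ ℓ * ‖x - y‖) (hη : 0 ≤ η) (hηℓ : ℓ * η ≤ 1) (x : E) :
    f (x - η • ∇ f x) ≤ f x - η / 2 * ‖∇ f x‖ ^ 2 := by
  have h := apply_le_add_inner_gradient_add_sq hf hlip x (x - η • ∇ f x)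
  rw [sub_sub_cancel_left, inner_neg_right, real_inner_smul_right, real_inner_self_eq_norm_sq,
    norm_neg, norm_smul, Real.norm_of_nonneg hη] at h
  nlinarith [mul_nonneg (mul_nonneg (sub_nonneg.2 hηℓ) hη) (sq_nonneg ‖∇ f x‖)]

section GradientDescent

variable {f : E → ℝ} {η : ℝ} {x : ℕ → E}

theorem antitone_comp_of_gradient_descent (hη : 0 ≤ η)
    (hdec : ∀ y, f (y - η • ∇ f y) ≤ f y - η / 2 * ‖∇ f y‖ ^ 2)
    (hgd : ∀ t, x (t + 1) = x t - η • ∇ f (x t)) : Antitone (f ∘ x) := by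
  refine antitone_nat_of_succ_le fun n ↦ ?_
  simp only [Function.comp, hgd n]
  nlinarith [hdec (x n), sq_nonneg ‖∇ f (x n)‖]

theorem half_mul_sum_sq_gradient_le
    (hdec : ∀ y, f (y - η • ∇ f y) ≤ f y - η / 2 * ‖∇ f y‖ ^ 2)
    (hgd : ∀ t, x (t + 1) = x t - η • ∇ f (x t)) (n : ℕ) :
    η / 2 * ∑ k ∈ range n, ‖∇ f (x k)‖ ^ 2 ≤ f (x 0) - f (x n) := by
  induction n with
  | zero => simp
  | succ n ih =>
    rw [sum_range_succ, mul_add, hgd n]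
    linarith [hdec (x n)]

theorem norm_sub_le_mul_sum_norm_gradient (hη : 0 ≤ η)
    (hgd : ∀ t, x (t + 1) = x t - η • ∇ f (x t)) (n : ℕ) :
    ‖x n - x 0‖ ≤ η * ∑ k ∈ range n, ‖∇ f (x k)‖ := by
  rw [← dist_eq_norm, dist_comm, mul_sum]
  refine (dist_le_range_sum_dist x n).trans_eq (sum_congr rfl fun k _ ↦ ?_)
  rw [dist_eq_norm, hgd k, sub_sub_cancel, norm_smul, Real.norm_of_nonneg hη]

theorem norm_sub_sq_le_of_gradient_descent (hη : 0 ≤ η)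
    (hdec : ∀ y, f (y - η • ∇ f y) ≤ f y - η / 2 * ‖∇ f y‖ ^ 2)
    (hgd : ∀ t, x (t + 1) = x t - η • ∇ f (x t)) (n : ℕ) :
    ‖x n - x 0‖ ^ 2 ≤ 2 * η * n * (f (x 0) - f (x n)) := by
  have hcs := sq_sum_le_card_mul_sum_sq (s := range n) (f := fun k ↦ ‖∇ f (x k)‖)
  rw [card_range] at hcs
  calc ‖x n - x 0‖ ^ 2 ≤ (η * ∑ k ∈ range n, ‖∇ f (x k)‖) ^ 2 :=
        pow_le_pow_left₀ (norm_nonneg _) (norm_sub_le_mul_sum_norm_gradient hη hgd n) 2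
    _ = η ^ 2 * (∑ k ∈ range n, ‖∇ f (x k)‖) ^ 2 := mul_pow _ _ _
    _ ≤ η ^ 2 * (n * ∑ k ∈ range n, ‖∇ f (x k)‖ ^ 2) := by gcongr
    _ = 2 * η * n * (η / 2 * ∑ k ∈ range n, ‖∇ f (x k)‖ ^ 2) := by ring
    _ ≤ 2 * η * n * (f (x 0) - f (x n)) := by
        gcongr; exact half_mul_sum_sq_gradient_le hdec hgd n

end GradientDescent

theorem gd_improve_or_localize_general
    (d : ℕ) (f : EuclideanSpace ℝ (Fin d) → ℝ) (ℓ η : ℝ)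
    (hη : 0 < η) (hηℓ : η ≤ 1 / ℓ)
    (hdiff : Differentiable ℝ f)
    (hlip : ∀ x y : EuclideanSpace ℝ (Fin d),
      ‖gradient f x - gradient f y‖ ≤ ℓ * ‖x - y‖)
    (x : ℕ → EuclideanSpace ℝ (Fin d))
    (hgd : ∀ t : ℕ, x (t + 1) = x t - η • gradient f (x t)) :
    ∀ t τ : ℕ, 0 < τ → τ ≤ t →
      ‖x τ - x 0‖ ≤ Real.sqrt (2 * η * t * (f (x 0) - f (x t))) := by
  intro t τ _ hτt
  have hℓ : 0 < ℓ := one_div_pos.mp (hη.trans_le hηℓ)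
  have hdec := apply_sub_smul_gradient_le hdiff hlip hη.le
    (by rwa [le_div_iff₀ hℓ, mul_comm] at hηℓ)
  have hdrop : f (x t) ≤ f (x τ) := antitone_comp_of_gradient_descent hη.le hdec hgd hτt
  have hgain : 0 ≤ f (x 0) - f (x τ) :=
    sub_nonneg.2 (antitone_comp_of_gradient_descent hη.le hdec hgd τ.zero_le)
  refine Real.le_sqrt_of_sq_le ((norm_sub_sq_le_of_gradient_descent hη.le hdec hgd τ).trans ?_)
  gcongr

/-- **Improve or Localize.** For an `ℓ`-gradient-Lipschitz `f` and step size
`0 < η ≤ 1/ℓ`, the gradient descent iterates satisfy, for any `t ≥ τ > 0`: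
`‖x τ - x 0‖ ≤ √(2 η t (f (x 0) - f (x t)))`. -/
theorem gd_improve_or_localize
    (d : ℕ) (f : EuclideanSpace ℝ (Fin d) → ℝ) (ℓ η : ℝ)
    (hℓ : 0 < ℓ) (hη : 0 < η) (hηℓ : η ≤ 1 / ℓ)
    (hdiff : Differentiable ℝ f)
    (hlip : ∀ x y : EuclideanSpace ℝ (Fin d),
      ‖gradient f x - gradient f y‖ ≤ ℓ * ‖x - y‖)
    (x : ℕ → EuclideanSpace ℝ (Fin d))
    (hgd : ∀ t : ℕ, x (t + 1) = x t - η • gradient f (x t)) :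
    ∀ t τ : ℕ, 0 < τ → τ ≤ t →
      ‖x τ - x 0‖ ≤ Real.sqrt (2 * η * t * (f (x 0) - f (x t))) :=
  gd_improve_or_localize_general d f ℓ η hη hηℓ hdiff hlip x hgd
end

section
/- Let f : ℝ^d → ℝ be twice continuously differentiable, and let {x_t}, {x'_t} be two sequences with common initial point x₀ = x'₀ evolving by x_{t+1} = x_t − η(∇f(x_t) + ζ_t + ξ_t) and x'_{t+1} = x'_t − η(∇f(x'_t) + ζ'_t + ξ'_t) for arbitrary vectors ζ_t, ξ_t, ζ'_t, ξ'_t ∈ ℝ^d. Set H = ∇²f(x₀), x̂_t = x_t − x'_t, ζ̂_τ = ζ_τ − ζ'_τ, ξ̂_τ = ξ_τ − ξ'_τ, and Δ_t = ∫₀¹ ∇²f(ψ·x_t + (1−ψ)·x'_t) dψ − H. Then for every t ≥ 1: x̂_t = −q_h(t) − q_sg(t) − q_p(t), where q_h(t) = η·Σ_{τ=0}^{t−1}(I − ηH)^{t−1−τ}·Δ_τ·x̂_τ, q_sg(t) = η·Σ_{τ=0}^{t−1}(I − ηH)^{t−1−τ}·ζ̂_τ, and q_p(t) = η·Σ_{τ=0}^{t−1}(I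 − ηH)^{t−1−τ}·ξ̂_τ. -/
lemma ftc_grad_diff (d : ℕ) (f : EuclideanSpace ℝ (Fin d) → ℝ) (hf : ContDiff ℝ 2 f)
    (a b : EuclideanSpace ℝ (Fin d)) :
    gradient f a - gradient f b =
      (∫ ψ in (0:ℝ)..(1:ℝ), fderiv ℝ (gradient f) (ψ • a + (1 - ψ) • b)) (a - b) := by
  have hg : ContDiff ℝ 1 (gradient f) := by
    have h1 : ContDiff ℝ 1 (fderiv ℝ f) := (hf.fderiv_right (by norm_num))
    exact ((InnerProductSpace.toDual ℝ (EuclideanSpace ℝ (Fin d))).symm.contDiff).comp h1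
  have hγ : ∀ ψ : ℝ, ψ • a + (1 - ψ) • b = b + ψ • (a - b) := by
    intro ψ; rw [sub_smul, one_smul, smul_sub]; abel
  have hcont : Continuous fun ψ : ℝ => fderiv ℝ (gradient f) (ψ • a + (1 - ψ) • b) := by
    apply hg.continuous_fderiv one_ne_zero |>.comp
    continuity
  have hderiv : ∀ ψ : ℝ, HasDerivAt (fun ψ : ℝ => gradient f (ψ • a + (1 - ψ) • b))
      ((fderiv ℝ (gradient f) (ψ • a + (1 - ψ) • b)) (a - b)) ψ := by
    intro ψ
    have hγ' : HasDerivAt (fun ψ : ℝ => ψ • a + (1 - ψ) • b) (a - b) ψ := by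
      simp_rw [hγ]
      exact (hasDerivAt_id ψ).smul_const (a - b) |>.const_add b |>.congr_deriv (by simp)
    exact ((hg.differentiable one_ne_zero _).hasFDerivAt.comp_hasDerivAt ψ hγ')
  have hint : IntervalIntegrable (fun ψ : ℝ => fderiv ℝ (gradient f) (ψ • a + (1 - ψ) • b))
      MeasureTheory.volume 0 1 := hcont.intervalIntegrable 0 1
  rw [ContinuousLinearMap.intervalIntegral_apply hint]
  have := intervalIntegral.integral_eq_sub_of_hasDerivAt
    (f := fun ψ : ℝ => gradient f (ψ • a + (1 - ψ) • b)) (fun ψ _ => hderiv ψ)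
    ((hcont.clm_apply continuous_const).intervalIntegrable 0 1)
  rw [this]; simp

set_option maxHeartbeats 1000000 in
/-- **Dynamics of the coupling sequence difference.** For twice continuously
differentiable `f` and two perturbed-gradient sequences with common initial point, the
difference `x̂ t = x t - x' t` decomposes as `x̂ t = -q_h(t) - q_sg(t) - q_p(t)`. -/
theorem coupling_sequence_difference_dynamics
    (d : ℕ) (f : EuclideanSpace ℝ (Fin d) → ℝ) (η : ℝ)
    (hf : ContDiff ℝ 2 f)
    (x x' ζ ξ ζ' ξ' : ℕ → EuclideanSpace ℝ (Fin d))
    (h0 : x 0 = x' 0)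
    (hx : ∀ t : ℕ, x (t + 1) = x t - η • (gradient f (x t) + ζ t + ξ t))
    (hx' : ∀ t : ℕ, x' (t + 1) = x' t - η • (gradient f (x' t) + ζ' t + ξ' t))
    (H : EuclideanSpace ℝ (Fin d) →L[ℝ] EuclideanSpace ℝ (Fin d))
    (hH : H = fderiv ℝ (gradient f) (x 0))
    (Δ : ℕ → (EuclideanSpace ℝ (Fin d) →L[ℝ] EuclideanSpace ℝ (Fin d)))
    (hΔ : ∀ t : ℕ,
      Δ t = (∫ ψ in (0:ℝ)..(1:ℝ), fderiv ℝ (gradient f) (ψ • x t + (1 - ψ) • x' t)) - H) :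
    ∀ t : ℕ, 1 ≤ t →
      x t - x' t =
        -(η • ∑ τ ∈ Finset.range t, ((1 - η • H) ^ (t - 1 - τ)) ((Δ τ) (x τ - x' τ)))
        - η • ∑ τ ∈ Finset.range t, ((1 - η • H) ^ (t - 1 - τ)) (ζ τ - ζ' τ)
        - η • ∑ τ ∈ Finset.range t, ((1 - η • H) ^ (t - 1 - τ)) (ξ τ - ξ' τ) := by
  -- step recursion
  have hstep : ∀ t : ℕ, x (t + 1) - x' (t + 1) =
      (1 - η • H) (x t - x' t) - η • ((Δ t) (x t - x' t))
      - η • (ζ t - ζ' t) - η • (ξ t - ξ' t) := by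
    intro t
    have hg : gradient f (x t) - gradient f (x' t) =
        ((Δ t) (x t - x' t)) + H (x t - x' t) := by
      rw [ftc_grad_diff d f hf (x t) (x' t)]
      rw [hΔ t]
      simp [ContinuousLinearMap.sub_apply]
    rw [hx t, hx' t]
    have h1 : (1 - η • H) (x t - x' t) = (x t - x' t) - η • (H (x t - x' t)) := by
      simp [ContinuousLinearMap.sub_apply]
    rw [h1]
    have : x t - η • (gradient f (x t) + ζ t + ξ t) -
        (x' t - η • (gradient f (x' t) + ζ' t + ξ' t)) =
        (x t - x' t) - η • ((gradient f (x t) - gradient f (x' t))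
          + (ζ t - ζ' t) + (ξ t - ξ' t)) := by
      simp only [smul_add, smul_sub]
      abel
    rw [this, hg]
    simp only [smul_add, smul_sub]
    abel
  -- general formula for all t (including 0)
  suffices h : ∀ t : ℕ,
      x t - x' t =
        -(η • ∑ τ ∈ Finset.range t, ((1 - η • H) ^ (t - 1 - τ)) ((Δ τ) (x τ - x' τ)))
        - η • ∑ τ ∈ Finset.range t, ((1 - η • H) ^ (t - 1 - τ)) (ζ τ - ζ' τ)
        - η • ∑ τ ∈ Finset.range t, ((1 - η • H) ^ (t - 1 - τ)) (ξ τ - ξ' τ) by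
    exact fun t _ => h t
  intro t
  induction t with
  | zero => simp [h0]
  | succ t ih =>
    rw [hstep t]
    nth_rewrite 1 [ih]
    have hpow : ∀ (τ : ℕ), τ < t → ∀ v : EuclideanSpace ℝ (Fin d),
        ((1 - η • H) ^ (t + 1 - 1 - τ)) v = (1 - η • H) (((1 - η • H) ^ (t - 1 - τ)) v) := by
      intro τ hτ v
      have : t + 1 - 1 - τ = (t - 1 - τ) + 1 := by omega
      rw [this, pow_succ']
      rfl
    have hsum : ∀ w : ℕ → EuclideanSpace ℝ (Fin d),
        ∑ τ ∈ Finset.range (t + 1), ((1 - η • H) ^ (t + 1 - 1 - τ)) (w τ) =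
        (1 - η • H) (∑ τ ∈ Finset.range t, ((1 - η • H) ^ (t - 1 - τ)) (w τ)) + w t := by
      intro w
      rw [Finset.sum_range_succ, map_sum]
      congr 1
      · exact Finset.sum_congr rfl fun τ hτ => hpow τ (Finset.mem_range.mp hτ) (w τ)
      · have he : t + 1 - 1 - t = 0 := by omega
        rw [he, pow_zero]; rfl
    rw [hsum, hsum, hsum]
    rw [map_sub, map_sub, map_neg, map_smul, map_smul, map_smul, map_sum]
    rw [smul_add, smul_add, smul_add]
    abel
end

section
/- For η, γ > 0 with ηγ ∈ (0, 1], define α(t) = (Σ_{τ=0}^{t−1} (1 + ηγ)^{2(t−1−τ)})^{1/2} and β(t) = (1 + ηγ)^t / √(2ηγ). Then (1) α(t) ≤ β(t) for every natural number t, and (2) α(t) ≥ β(t)/√3 for every t ≥ ln(2)/(ηγ). -/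
/-- For `η, γ > 0` with `ηγ ∈ (0,1]`, define
`α(t) = (∑_{τ=0}^{t-1} (1+ηγ)^{2(t-1-τ)})^{1/2}` and `β(t) = (1+ηγ)^t / √(2ηγ)`.
Then `α(t) ≤ β(t)` for every `t : ℕ`, and `α(t) ≥ β(t)/√3` whenever `t ≥ ln 2 / (ηγ)`. -/
theorem alpha_beta_comparison (η γ : ℝ) (hη : 0 < η) (hγ : 0 < γ) (hηγ : η * γ ≤ 1) :
    (∀ t : ℕ,
      Real.sqrt (∑ τ ∈ Finset.range t, (1 + η * γ) ^ (2 * (t - 1 - τ)))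
        ≤ (1 + η * γ) ^ t / Real.sqrt (2 * η * γ)) ∧
    (∀ t : ℕ, Real.log 2 / (η * γ) ≤ (t : ℝ) →
      (1 + η * γ) ^ t / Real.sqrt (2 * η * γ) / Real.sqrt 3
        ≤ Real.sqrt (∑ τ ∈ Finset.range t, (1 + η * γ) ^ (2 * (t - 1 - τ)))) := by
  set x := η * γ with hxdef
  have hx : 0 < x := mul_pos hη hγ
  have h1x : (0:ℝ) < 1 + x := by linarith
  have hy1 : (1:ℝ) < (1 + x)^2 := by nlinarith
  have h2x : (2:ℝ) * η * γ = 2 * x := by rw [hxdef]; ring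
  have key : ∀ t : ℕ, (∑ τ ∈ Finset.range t, (1 + x) ^ (2 * (t - 1 - τ)))
      = (((1 + x)^2) ^ t - 1) / ((1 + x)^2 - 1) := by
    intro t
    rw [show (∑ τ ∈ Finset.range t, (1 + x) ^ (2 * (t - 1 - τ)))
        = ∑ τ ∈ Finset.range t, ((1+x)^2) ^ (t - 1 - τ) by
      simp [pow_mul],
      Finset.sum_range_reflect (fun k => ((1+x)^2)^k) t,
      geom_sum_eq (ne_of_gt hy1)]
  have hsq : ∀ t : ℕ, ((1+x)^2)^t = ((1+x)^t)^2 := by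
    intro t; rw [← pow_mul, ← pow_mul, mul_comm]
  have hyt1 : ∀ t : ℕ, (1:ℝ) ≤ ((1+x)^2)^t := fun t => one_le_pow₀ hy1.le
  constructor
  · intro t
    rw [key t]
    have h1 : (((1 + x)^2) ^ t - 1) / ((1 + x)^2 - 1) ≤ ((1+x)^2)^t / (2*x) := by
      rw [div_le_div_iff₀ (by nlinarith) (by nlinarith)]
      have h := hyt1 t
      nlinarith [mul_nonneg (le_trans zero_le_one h) (sq_nonneg x), hx]
    calc Real.sqrt ((((1 + x)^2) ^ t - 1) / ((1 + x)^2 - 1))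
        ≤ Real.sqrt (((1+x)^2)^t / (2*x)) := Real.sqrt_le_sqrt h1
      _ = (1 + x) ^ t / Real.sqrt (2 * η * γ) := by
          rw [h2x, Real.sqrt_div (by positivity), hsq t,
            Real.sqrt_sq (by positivity)]
  · intro t ht
    rw [key t]
    have htx : Real.log 2 ≤ t * x := by
      rw [div_le_iff₀ hx] at ht; linarith
    have hbern : 1 + (t:ℝ) * x ≤ (1+x)^t := by
      have := one_add_mul_le_pow (a := x) (by linarith) t
      linarith
    have hlog2 : (0.6931471803 : ℝ) < Real.log 2 := Real.log_two_gt_d9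
    have hyt2 : (2:ℝ) ≤ ((1+x)^2)^t := by
      rw [hsq t]
      nlinarith [pow_pos h1x t]
    have h2 : ((1+x)^2)^t / (6*x) ≤ (((1 + x)^2) ^ t - 1) / ((1 + x)^2 - 1) := by
      rw [div_le_div_iff₀ (by nlinarith) (by nlinarith)]
      nlinarith [mul_nonneg (sub_nonneg.2 hyt2) (mul_nonneg hx.le (by linarith : (0:ℝ) ≤ 4 - x)),
        mul_nonneg hx.le (by linarith : (0:ℝ) ≤ 1 - x)]
    calc (1 + x) ^ t / Real.sqrt (2 * η * γ) / Real.sqrt 3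
        = (1 + x) ^ t / Real.sqrt (6 * x) := by
          rw [h2x, div_div, ← Real.sqrt_mul (by positivity : (0:ℝ) ≤ 2*x),
            show (2:ℝ)*x*3 = 6*x by ring]
      _ = Real.sqrt (((1+x)^2)^t / (6*x)) := by
          rw [Real.sqrt_div (by positivity), hsq t,
            Real.sqrt_sq (by positivity)]
      _ ≤ Real.sqrt ((((1 + x)^2) ^ t - 1) / ((1 + x)^2 - 1)) := Real.sqrt_le_sqrt h2
end
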